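/- arXiv:1002.0125 — 8 statements merged into one kernel-verified Lean document; each statement's English description precedes it below -/
import Mathlib

section
/- Every finite simple graph without isolated vertices has a dominating set D with 2·|D| ≤ |V|. -/
/-- Every finite simple graph without isolated vertices has a dominating set
`D` with `2 * |D| ≤ Fintype.card V`. -/
theorem small_dominating_set_exists {V : Type*} [Fintype V]
    (G : SimpleGraph V) (hiso : ∀ v : V, ∃ u, G.Adj v u) :
    ∃ D : Finset V, (∀ v : V, v ∈ D ∨ ∃ u ∈ D, G.Adj v u) ∧
      2 * D.card ≤ Fintype.card V := by
  classical
  -- the set of dominating finsets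
  set P : Finset V → Prop := fun D => ∀ v : V, v ∈ D ∨ ∃ u ∈ D, G.Adj v u with hP
  have hPuniv : P Finset.univ := fun v => Or.inl (Finset.mem_univ v)
  -- pick a dominating set of minimum cardinality
  obtain ⟨D, hDmem, hDmin⟩ :=
    Finset.exists_min_image (Finset.univ.filter P) Finset.card
      ⟨Finset.univ, Finset.mem_filter.mpr ⟨Finset.mem_univ _, hPuniv⟩⟩
  have hD : P D := (Finset.mem_filter.mp hDmem).2
  have hmin : ∀ D' : Finset V, P D' → D.card ≤ D'.card := by
    intro D' hD'
    exact hDmin D' (Finset.mem_filter.mpr ⟨Finset.mem_univ _, hD'⟩)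
  by_cases hle : 2 * D.card ≤ Fintype.card V
  · exact ⟨D, hD, hle⟩
  · -- complement of a minimal dominating set is dominating
    refine ⟨Dᶜ, ?_, ?_⟩
    · intro v
      by_cases hv : v ∈ D
      · -- need a neighbour of v outside D
        right
        by_contra hcon
        push_neg at hcon
        -- every neighbour of v lies in D
        have hall : ∀ u, G.Adj v u → u ∈ D := by
          intro u hu
          by_contra hx
          exact hcon u (Finset.mem_compl.mpr hx) hu
        -- then D.erase v is dominating, contradicting minimality
        have herase : P (D.erase v) := by
          intro w
          by_cases hwv : w = v
          · subst hwv
            obtain ⟨u, hu⟩ := hiso w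
            right
            exact ⟨u, Finset.mem_erase.mpr ⟨(G.ne_of_adj hu).symm, hall u hu⟩, hu⟩
          · rcases hD w with hw | ⟨u, huD, huw⟩
            · exact Or.inl (Finset.mem_erase.mpr ⟨hwv, hw⟩)
            · by_cases huv : u = v
              · subst huv
                exact Or.inl (Finset.mem_erase.mpr ⟨hwv, hall w huw.symm⟩)
              · exact Or.inr ⟨u, Finset.mem_erase.mpr ⟨huv, huD⟩, huw⟩
        have := hmin _ herase
        have hlt : (D.erase v).card < D.card := Finset.card_erase_lt_of_mem hv
        omega
      · exact Or.inl (Finset.mem_compl.mpr hv)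
    · have h1 : Dᶜ.card = Fintype.card V - D.card := Finset.card_compl D
      have h2 : D.card ≤ Fintype.card V := Finset.card_le_univ D
      omega
end

section
/- Every finite simple graph without isolated vertices in which every vertex has degree at most Δ has a matching M with (Δ + 1)·|M| ≥ |V|. -/
/-!
Take a maximum matching `M`. Unmatched vertices are pairwise non-adjacent, so each of them has a
neighbour on an edge of `M`. For an edge `ab ∈ M`, an unmatched `u ~ a` and a different unmatched
`w ~ b` would give the augmenting path `u a b w`; hence `a`, `b` and all unmatched neighbours of `a`
or `b` lie in the closed neighbourhood of `a` or in that of `b`, a set of at most `Δ + 1` vertices.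
These `|M|` sets cover `V`.
-/

open Finset

namespace SimpleGraph

variable {V : Type*} (G : SimpleGraph V)

def IsEdgeMatching (M : Finset (Sym2 V)) : Prop :=
  (∀ e ∈ M, e ∈ G.edgeSet) ∧ (M : Set (Sym2 V)).Pairwise fun e f => ∀ v : V, v ∈ e → v ∉ f

def IsMaximumEdgeMatching (M : Finset (Sym2 V)) : Prop :=
  G.IsEdgeMatching M ∧ ∀ M', G.IsEdgeMatching M' → #M' ≤ #M

variable {G}

theorem IsEdgeMatching.mono {M M' : Finset (Sym2 V)} (hM : G.IsEdgeMatching M) (h : M' ⊆ M) :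
    G.IsEdgeMatching M' :=
  ⟨fun e he => hM.1 e (h he), hM.2.mono (coe_subset.2 h)⟩

theorem exists_isMaximumEdgeMatching [Finite V] : ∃ M, G.IsMaximumEdgeMatching M := by
  classical
  have := Fintype.ofFinite V
  obtain ⟨M, hM, hmax⟩ := exists_max_image (univ.filter G.IsEdgeMatching) card
    ⟨∅, mem_filter.2 ⟨mem_univ _, by simp [IsEdgeMatching]⟩⟩
  exact ⟨M, (mem_filter.1 hM).2, fun M' hM' => hmax M' (mem_filter.2 ⟨mem_univ _, hM'⟩)⟩

section DecidableEq

variable [DecidableEq V] {M : Finset (Sym2 V)}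

theorem IsEdgeMatching.insert {u w : V} (hM : G.IsEdgeMatching M) (huw : G.Adj u w)
    (hu : ∀ f ∈ M, u ∉ f) (hw : ∀ f ∈ M, w ∉ f) : G.IsEdgeMatching (insert s(u, w) M) := by
  refine ⟨by simpa [huw] using hM.1, ?_⟩
  rw [coe_insert, Set.pairwise_insert]
  refine ⟨hM.2, fun f hf _ => ⟨fun v hv => ?_, fun v hvf hv => ?_⟩⟩ <;>
    rcases Sym2.mem_iff.1 hv with rfl | rfl
  exacts [hu f hf, hw f hf, hu f hf hvf, hw f hf hvf]

theorem IsEdgeMatching.forall_notMem_erase {e : Sym2 V} {v : V} (hM : G.IsEdgeMatching M)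
    (he : e ∈ M) (hv : v ∈ e) : ∀ f ∈ M.erase e, v ∉ f :=
  fun _ hf => hM.2 he (mem_of_mem_erase hf) (ne_of_mem_erase hf).symm v hv

theorem card_insert_of_forall_notMem {u : V} (w : V) (hu : ∀ f ∈ M, u ∉ f) :
    #(insert s(u, w) M) = #M + 1 :=
  card_insert_of_notMem fun h => hu _ h (Sym2.mem_mk_left u w)

theorem IsMaximumEdgeMatching.not_adj {u w : V} (hM : G.IsMaximumEdgeMatching M)
    (hu : ∀ f ∈ M, u ∉ f) (hw : ∀ f ∈ M, w ∉ f) : ¬G.Adj u w := fun huw => by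
  have := hM.2 _ (hM.1.insert huw hu hw)
  rw [card_insert_of_forall_notMem w hu] at this
  omega

theorem IsMaximumEdgeMatching.not_adj_of_augmenting {a b u w : V}
    (hM : G.IsMaximumEdgeMatching M) (hab : s(a, b) ∈ M) (hu : ∀ f ∈ M, u ∉ f)
    (hw : ∀ f ∈ M, w ∉ f) (huw : u ≠ w) (hua : G.Adj u a) : ¬G.Adj w b := fun hwb => by
  set M₀ := M.erase s(a, b)
  have ha₀ := hM.1.forall_notMem_erase hab (Sym2.mem_mk_left a b)
  have hb₀ := hM.1.forall_notMem_erase hab (Sym2.mem_mk_right a b)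
  have hu₀ : ∀ f ∈ M₀, u ∉ f := fun f hf => hu f (mem_of_mem_erase hf)
  have hw₀ : ∀ f ∈ M₀, w ∉ f := fun f hf => hw f (mem_of_mem_erase hf)
  have hub : u ≠ b := by rintro rfl; exact hu _ hab (Sym2.mem_mk_right a u)
  have haw : a ≠ w := by rintro rfl; exact hw _ hab (Sym2.mem_mk_left a b)
  have hu₁ : ∀ f ∈ insert s(w, b) M₀, u ∉ f := by
    simp only [mem_insert, forall_eq_or_imp, Sym2.mem_iff, not_or]
    exact ⟨⟨huw, hub⟩, hu₀⟩
  have ha₁ : ∀ f ∈ insert s(w, b) M₀, a ∉ f := by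
    simp only [mem_insert, forall_eq_or_imp, Sym2.mem_iff, not_or]
    exact ⟨⟨haw, (hM.1.1 _ hab : G.Adj a b).ne⟩, ha₀⟩
  have := hM.2 _ (((hM.1.mono (erase_subset _ _)).insert hwb hw₀ hb₀).insert hua hu₁ ha₁)
  rw [card_insert_of_forall_notMem a hu₁, card_insert_of_forall_notMem b hw₀,
    card_erase_of_mem hab] at this
  have := card_pos.2 ⟨_, hab⟩
  omega

end DecidableEq

variable (G) in
open Classical in
noncomputable def matchingCluster [Fintype V] (M : Finset (Sym2 V)) (e : Sym2 V) : Finset V :=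
  univ.filter fun v => v ∈ e ∨ ((∀ f ∈ M, v ∉ f) ∧ ∃ x ∈ e, G.Adj v x)

theorem mem_matchingCluster [Fintype V] {M : Finset (Sym2 V)} {e : Sym2 V} {v : V} :
    v ∈ G.matchingCluster M e ↔ v ∈ e ∨ ((∀ f ∈ M, v ∉ f) ∧ ∃ x ∈ e, G.Adj v x) := by
  simp [matchingCluster]

theorem adj_of_mem_matchingCluster [Fintype V] {M : Finset (Sym2 V)} {a b v : V}
    (hab : G.Adj a b) (hv : v ∈ G.matchingCluster M s(a, b)) (hva : v ≠ a) (hav : ¬G.Adj a v) :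
    (∀ f ∈ M, v ∉ f) ∧ G.Adj v b := by
  rcases mem_matchingCluster.1 hv with hve | ⟨hvM, x, hx, hvx⟩
  · rcases Sym2.mem_iff.1 hve with rfl | rfl
    exacts [(hva rfl).elim, (hav hab).elim]
  · rcases Sym2.mem_iff.1 hx with rfl | rfl
    exacts [(hav hvx.symm).elim, ⟨hvM, hvx⟩]

section DecidableEq

variable [DecidableEq V] [Fintype V] {M : Finset (Sym2 V)}

theorem IsMaximumEdgeMatching.exists_mem_matchingCluster (hM : G.IsMaximumEdgeMatching M)
    (hiso : ∀ v : V, ∃ u, G.Adj v u) (v : V) : ∃ e ∈ M, v ∈ G.matchingCluster M e := by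
  by_cases hv : ∃ e ∈ M, v ∈ e
  · obtain ⟨e, he, hve⟩ := hv
    exact ⟨e, he, mem_matchingCluster.2 (Or.inl hve)⟩
  push Not at hv
  obtain ⟨u, hvu⟩ := hiso v
  obtain ⟨e, he, hue⟩ : ∃ e ∈ M, u ∈ e := by
    by_contra! hu
    exact hM.not_adj hv hu hvu
  exact ⟨e, he, mem_matchingCluster.2 (Or.inr ⟨hv, u, hue, hvu⟩)⟩

theorem IsMaximumEdgeMatching.exists_matchingCluster_subset [DecidableRel G.Adj]
    (hM : G.IsMaximumEdgeMatching M) {e : Sym2 V} (he : e ∈ M) :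
    ∃ x, G.matchingCluster M e ⊆ insert x (G.neighborFinset x) := by
  induction e using Sym2.ind with
  | _ a b =>
  have hab : G.Adj a b := hM.1.1 _ he
  by_contra! h
  obtain ⟨w, hw, hwa⟩ := not_subset.1 (h a)
  obtain ⟨u, hu, hub⟩ := not_subset.1 (h b)
  simp only [mem_insert, mem_neighborFinset, not_or] at hwa hub
  obtain ⟨hw, hwb⟩ := adj_of_mem_matchingCluster hab hw hwa.1 hwa.2
  obtain ⟨hu, hua⟩ := adj_of_mem_matchingCluster hab.symm (Sym2.eq_swap ▸ hu) hub.1 hub.2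
  exact hM.not_adj_of_augmenting he hu hw (fun huw => hwa.2 (huw ▸ hua.symm)) hua hwb

theorem IsMaximumEdgeMatching.card_matchingCluster_le [DecidableRel G.Adj] {Δ : ℕ}
    (hM : G.IsMaximumEdgeMatching M) (hdeg : ∀ v : V, G.degree v ≤ Δ) {e : Sym2 V}
    (he : e ∈ M) : #(G.matchingCluster M e) ≤ Δ + 1 := by
  obtain ⟨x, hx⟩ := hM.exists_matchingCluster_subset he
  calc #(G.matchingCluster M e) ≤ #(insert x (G.neighborFinset x)) := card_le_card hx
    _ ≤ G.degree x + 1 := card_insert_le _ _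
    _ ≤ Δ + 1 := Nat.add_le_add_right (hdeg x) 1

theorem IsMaximumEdgeMatching.card_le [DecidableRel G.Adj] {Δ : ℕ}
    (hM : G.IsMaximumEdgeMatching M) (hiso : ∀ v : V, ∃ u, G.Adj v u)
    (hdeg : ∀ v : V, G.degree v ≤ Δ) : Fintype.card V ≤ (Δ + 1) * #M :=
  calc Fintype.card V ≤ #(M.biUnion (G.matchingCluster M)) :=
        card_le_card fun v _ => mem_biUnion.2 (hM.exists_mem_matchingCluster hiso v)
    _ ≤ ∑ e ∈ M, #(G.matchingCluster M e) := card_biUnion_le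
    _ ≤ ∑ _e ∈ M, (Δ + 1) := sum_le_sum fun _ he => hM.card_matchingCluster_le hdeg he
    _ = (Δ + 1) * #M := by rw [sum_const, smul_eq_mul, mul_comm]

end DecidableEq

end SimpleGraph

theorem large_matching_exists_general {V : Type*} [Fintype V]
    (G : SimpleGraph V) [DecidableRel G.Adj]
    (Δ : ℕ) (hiso : ∀ v : V, ∃ u, G.Adj v u)
    (hdeg : ∀ v : V, G.degree v ≤ Δ) :
    ∃ M : Finset (Sym2 V),
      (∀ e ∈ M, e ∈ G.edgeSet) ∧
      ((M : Set (Sym2 V)).Pairwise fun e f => ∀ v : V, v ∈ e → v ∉ f) ∧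
      Fintype.card V ≤ (Δ + 1) * M.card := by
  classical
  obtain ⟨M, hM⟩ := G.exists_isMaximumEdgeMatching
  exact ⟨M, hM.1.1, hM.1.2, hM.card_le hiso hdeg⟩

/-- Every finite simple graph without isolated vertices and with maximum degree
at most `Δ ≥ 1` has a matching `M` with `(Δ + 1) * |M| ≥ |V|`. -/
theorem large_matching_exists {V : Type*} [Fintype V] [DecidableEq V]
    (G : SimpleGraph V) [DecidableRel G.Adj]
    (Δ : ℕ) (hΔ : 1 ≤ Δ) (hiso : ∀ v : V, ∃ u, G.Adj v u)
    (hdeg : ∀ v : V, G.degree v ≤ Δ) :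
    ∃ M : Finset (Sym2 V),
      (∀ e ∈ M, e ∈ G.edgeSet) ∧
      ((M : Set (Sym2 V)).Pairwise fun e f => ∀ v : V, v ∈ e → v ∉ f) ∧
      Fintype.card V ≤ (Δ + 1) * M.card :=
  large_matching_exists_general G Δ hiso hdeg
end

section
/- Let Δ ≥ 2, let n ≥ Δ + 1 be a multiple of Δ + 1, and let G(Δ, n) be the bipartite double-cycle graph. Then G(Δ, n) has a dominating set of size 2n/(Δ + 1). -/
/-- The bipartite double-cycle graph `G(Δ, n)` on `(ZMod n) × Bool`: the only
adjacencies are `(u, false) ~ (v, true)` iff `v - u ∈ {0, 1, …, Δ - 1}`. -/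
def doubleCycle (Δ n : ℕ) : SimpleGraph (ZMod n × Bool) :=
  SimpleGraph.fromRel (fun a b =>
    a.2 = false ∧ b.2 = true ∧ ∃ i : ℕ, i < Δ ∧ b.1 - a.1 = (i : ZMod n))

/-- If `Δ ≥ 2` and `n ≥ Δ + 1` is a multiple of `Δ + 1`, then `G(Δ, n)` has a
dominating set of size `2n / (Δ + 1)`. -/
theorem double_cycle_dominating_set (Δ n : ℕ) [NeZero n] (hΔ : 2 ≤ Δ)
    (hn : Δ + 1 ≤ n) (hdvd : (Δ + 1) ∣ n) :
    ∃ D : Finset (ZMod n × Bool),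
      (∀ v : ZMod n × Bool, v ∈ D ∨ ∃ u ∈ D, (doubleCycle Δ n).Adj v u) ∧
      D.card = 2 * n / (Δ + 1) := by
  classical
  have hΔ1 : 0 < Δ + 1 := by omega
  have hmul : n / (Δ + 1) * (Δ + 1) = n := Nat.div_mul_cancel hdvd
  refine ⟨Finset.univ.filter
      (fun p => p.1.val % (Δ + 1) = if p.2 then Δ else 0), ?_, ?_⟩
  · rintro ⟨x, b⟩
    have hxval : ((x.val : ℕ) : ZMod n) = x := ZMod.natCast_rightInverse x
    have hvlt : x.val < n := ZMod.val_lt x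
    set r := x.val % (Δ + 1) with hr
    have hrlt : r < Δ + 1 := Nat.mod_lt _ hΔ1
    have hdm : (Δ + 1) * (x.val / (Δ + 1)) + r = x.val := Nat.div_add_mod _ _
    have hrle : r ≤ x.val := Nat.mod_le _ _
    cases b with
    | true =>
      by_cases hrd : r = Δ
      · left
        simp only [Finset.mem_filter, Finset.mem_univ, true_and, if_true]
        exact hrd
      · right
        refine ⟨(((x.val - r : ℕ) : ZMod n), false), ?_, ?_⟩
        · simp only [Finset.mem_filter, Finset.mem_univ, true_and, if_false,
            Bool.false_eq_true]
          have hv : ((x.val - r : ℕ) : ZMod n).val = x.val - r := by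
            rw [ZMod.val_natCast, Nat.mod_eq_of_lt (by omega)]
          rw [hv]
          have : x.val - r = (Δ + 1) * (x.val / (Δ + 1)) := by omega
          rw [this, Nat.mul_mod_right]
        · rw [doubleCycle, SimpleGraph.fromRel_adj]
          refine ⟨by simp, Or.inr ⟨rfl, rfl, r, by omega, ?_⟩⟩
          have : ((x.val - r : ℕ) : ZMod n) = (x.val : ZMod n) - (r : ZMod n) := by
            push_cast [Nat.cast_sub hrle]; ring
          rw [this, hxval]
          ring
    | false =>
      by_cases hrd : r = 0
      · left
        simp only [Finset.mem_filter, Finset.mem_univ, true_and, if_false,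
          Bool.false_eq_true]
        exact hrd
      · right
        refine ⟨(((x.val + (Δ - r) : ℕ) : ZMod n), true), ?_, ?_⟩
        · simp only [Finset.mem_filter, Finset.mem_univ, true_and, if_true]
          rw [ZMod.val_natCast, Nat.mod_mod_of_dvd _ hdvd]
          have : x.val + (Δ - r) = (Δ + 1) * (x.val / (Δ + 1)) + Δ := by omega
          rw [this, Nat.mul_add_mod, Nat.mod_eq_of_lt (by omega)]
        · rw [doubleCycle, SimpleGraph.fromRel_adj]
          refine ⟨by simp, Or.inl ⟨rfl, rfl, Δ - r, by omega, ?_⟩⟩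
          have : ((x.val + (Δ - r) : ℕ) : ZMod n)
              = (x.val : ZMod n) + ((Δ - r : ℕ) : ZMod n) := by push_cast; ring
          rw [this, hxval]
          ring
  · have hcard : 2 * n / (Δ + 1) = 2 * (n / (Δ + 1)) := Nat.mul_div_assoc _ hdvd
    rw [hcard]
    have hfin : (Finset.univ : Finset (Fin (n / (Δ + 1)) × Bool)).card
        = 2 * (n / (Δ + 1)) := by
      simp [Finset.card_univ, mul_comm]
    rw [← hfin]
    refine Finset.card_bij'
      (i := fun p _ => ((⟨p.1.val / (Δ + 1),
        Nat.div_lt_div_of_lt_of_dvd hdvd (ZMod.val_lt p.1)⟩ : Fin (n / (Δ + 1))), p.2))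
      (j := fun q _ => ((((Δ + 1) * q.1.val + (if q.2 then Δ else 0) : ℕ) : ZMod n), q.2))
      (fun a ha => Finset.mem_univ _) ?_ ?_ ?_
    · rintro ⟨⟨k, hk⟩, b⟩ -
      simp only [Finset.mem_filter, Finset.mem_univ, true_and]
      have hlt : (Δ + 1) * k + (if b then Δ else 0) < n := by
        have hk' : k + 1 ≤ n / (Δ + 1) := hk
        have h1 : (Δ + 1) * (k + 1) ≤ (Δ + 1) * (n / (Δ + 1)) :=
          Nat.mul_le_mul_left _ hk'
        have h2 : (Δ + 1) * (k + 1) = (Δ + 1) * k + (Δ + 1) := by ring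
        have h3 : (Δ + 1) * (n / (Δ + 1)) = n := Nat.mul_div_cancel' hdvd
        have hb : (if b then Δ else 0) ≤ Δ := by cases b <;> simp
        omega
      rw [ZMod.val_natCast, Nat.mod_eq_of_lt hlt, Nat.mul_add_mod,
        Nat.mod_eq_of_lt (by cases b <;> simp <;> omega)]
    · rintro ⟨x, b⟩ hp
      simp only [Finset.mem_filter, Finset.mem_univ, true_and] at hp
      have hdm : (Δ + 1) * (x.val / (Δ + 1)) + x.val % (Δ + 1) = x.val :=
        Nat.div_add_mod _ _
      have : (Δ + 1) * (x.val / (Δ + 1)) + (if b then Δ else 0) = x.val := by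
        rw [← hp]; exact hdm
      simp only [Prod.mk.injEq]
      refine ⟨?_, trivial⟩
      rw [this]
      exact ZMod.natCast_rightInverse x
    · rintro ⟨⟨k, hk⟩, b⟩ -
      have hlt : (Δ + 1) * k + (if b then Δ else 0) < n := by
        have hk' : k + 1 ≤ n / (Δ + 1) := hk
        have h1 : (Δ + 1) * (k + 1) ≤ (Δ + 1) * (n / (Δ + 1)) :=
          Nat.mul_le_mul_left _ hk'
        have h2 : (Δ + 1) * (k + 1) = (Δ + 1) * k + (Δ + 1) := by ring
        have h3 : (Δ + 1) * (n / (Δ + 1)) = n := Nat.mul_div_cancel' hdvd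
        have hb : (if b then Δ else 0) ≤ Δ := by cases b <;> simp
        omega
      simp only [Prod.mk.injEq]
      refine ⟨?_, trivial⟩
      apply Fin.ext
      simp only
      rw [ZMod.val_natCast, Nat.mod_eq_of_lt hlt, Nat.mul_add_div hΔ1,
        Nat.div_eq_of_lt (by cases b <;> simp <;> omega), Nat.add_zero]
end

section
/- Let Δ ≥ 2, n ≥ Δ + 1, and let D be a dominating set of the bipartite double-cycle graph G(Δ, n). Then there exists an independent set I of the cycle graph C_n with (Δ − 1)·|I| ≥ |B|, where B = { v ∈ ZMod n : (v, false) ∉ D and (v, true) ∉ D }; moreover |B| ≥ n − |D|. -/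
/-- The cycle graph on `ZMod n`. -/
def cycleGraph (n : ℕ) : SimpleGraph (ZMod n) :=
  SimpleGraph.fromRel (fun u v => v = u + 1)

/-! Each `v ∈ B` is dominated through `(v, true)` by some `(u, false) ∈ D` with
`v = u + i`, `0 < i < Δ` (`i ≠ 0` as `(v, false) ∉ D`). So `B ⊆ U + {1, …, Δ - 1}` with
`U = {u : (u, false) ∈ D}` disjoint from `B`, whence `|B| ≤ (Δ - 1)|U|` and `|U| + |B| ≤ n`.
Then `q = min |B| |U|` satisfies `|B| ≤ (Δ - 1) q` and `2q ≤ n`, and the even residues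
`0, 2, …, 2(q - 1)` form an independent set of `C_n` of size `q`. -/

open Finset Pointwise

theorem card_sub_card_le_card_filter_not_mem {α : Type*} [Fintype α] [DecidableEq α]
    (D : Finset (α × Bool)) :
    Fintype.card α - #D ≤ #{v | (v, false) ∉ D ∧ (v, true) ∉ D} := by
  have hcompl : #(univ.filter fun v : α => ¬((v, false) ∉ D ∧ (v, true) ∉ D)) ≤ #D := by
    refine (card_le_card fun v hv => ?_).trans (card_image_le (f := Prod.fst))
    simp only [mem_filter, mem_univ, true_and, not_and, not_not] at hv
    by_cases hf : (v, false) ∈ D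
    · exact mem_image_of_mem Prod.fst hf
    · exact mem_image_of_mem Prod.fst (hv hf)
  have hsplit :=
    card_filter_add_card_filter_not (s := univ) fun v : α => (v, false) ∉ D ∧ (v, true) ∉ D
  rw [card_univ] at hsplit
  omega

theorem doubleCycle_adj_true_iff {Δ n : ℕ} {v : ZMod n} {a : ZMod n × Bool} :
    (doubleCycle Δ n).Adj (v, true) a ↔ a.2 = false ∧ ∃ i < Δ, v - a.1 = (i : ZMod n) := by
  obtain ⟨u, b⟩ := a
  cases b <;> simp [doubleCycle, SimpleGraph.fromRel_adj]

theorem exists_mem_false_add_of_dominating {Δ n : ℕ} {D : Finset (ZMod n × Bool)}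
    (hD : ∀ v : ZMod n × Bool, v ∈ D ∨ ∃ u ∈ D, (doubleCycle Δ n).Adj v u) {v : ZMod n}
    (hvf : (v, false) ∉ D) (hvt : (v, true) ∉ D) :
    ∃ u, (u, false) ∈ D ∧ ∃ i, 0 < i ∧ i < Δ ∧ v = u + (i : ZMod n) := by
  obtain h | ⟨⟨u, b⟩, hu, hadj⟩ := hD (v, true)
  · exact absurd h hvt
  obtain ⟨rfl, i, hiΔ, hi⟩ := doubleCycle_adj_true_iff.1 hadj
  refine ⟨u, hu, i, Nat.pos_of_ne_zero ?_, hiΔ, eq_add_of_sub_eq' hi⟩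
  rintro rfl
  rw [Nat.cast_zero, sub_eq_zero] at hi
  exact hvf (hi ▸ hu)

theorem cycleGraph_exists_indep_card_eq {n q : ℕ} (hq : 2 * q ≤ n) :
    ∃ I : Finset (ZMod n), (∀ u ∈ I, ∀ v ∈ I, ¬(cycleGraph n).Adj u v) ∧ #I = q := by
  have cast_inj {a b : ℕ} (ha : a < n) (hb : b < n) (h : (a : ZMod n) = b) : a = b := by
    rwa [ZMod.natCast_eq_natCast_iff', Nat.mod_eq_of_lt ha, Nat.mod_eq_of_lt hb] at h
  have not_succ {i j : ℕ} (hi : i < q) (hj : j < q) :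
      ((2 * j : ℕ) : ZMod n) ≠ ((2 * i : ℕ) : ZMod n) + 1 := fun h => by
    have := cast_inj (by omega) (by omega) (h.trans (Nat.cast_succ (2 * i)).symm)
    omega
  refine ⟨(range q).image fun i => ((2 * i : ℕ) : ZMod n), ?_, ?_⟩
  · simp only [mem_image, mem_range]
    rintro _ ⟨i, hi, rfl⟩ _ ⟨j, hj, rfl⟩ hadj
    obtain ⟨-, h | h⟩ := SimpleGraph.fromRel_adj _ _ _ |>.1 hadj
    exacts [not_succ hi hj h, not_succ hj hi h]
  · rw [card_image_of_injOn, card_range]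
    intro i hi j hj hij
    simp only [coe_range, Set.mem_Iio] at hi hj
    have := cast_inj (by omega) (by omega) hij
    omega

theorem exists_two_mul_le_of_le_mul {b c m n : ℕ} (hb : b ≤ c * m) (hn : m + b ≤ n) :
    ∃ q, 2 * q ≤ n ∧ b ≤ c * q := by
  refine ⟨min b m, by omega, ?_⟩
  rcases le_total b m with h | h
  · rw [min_eq_left h]
    rcases c with _ | c
    · simpa using hb
    · exact Nat.le_mul_of_pos_left b c.succ_pos
  · rwa [min_eq_right h]

theorem double_cycle_dominating_to_independent_general (Δ n : ℕ) [NeZero n]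
    (D : Finset (ZMod n × Bool))
    (hD : ∀ v : ZMod n × Bool, v ∈ D ∨ ∃ u ∈ D, (doubleCycle Δ n).Adj v u) :
    let B : Finset (ZMod n) :=
      Finset.univ.filter (fun v : ZMod n => (v, false) ∉ D ∧ (v, true) ∉ D)
    (∃ I : Finset (ZMod n),
      (∀ u ∈ I, ∀ v ∈ I, ¬ (cycleGraph n).Adj u v) ∧
      B.card ≤ (Δ - 1) * I.card) ∧
    n - D.card ≤ B.card := by
  intro B
  set U : Finset (ZMod n) := {u | (u, false) ∈ D}
  have hBU : B ⊆ U + (Ico 1 Δ).image (Nat.cast : ℕ → ZMod n) := fun v hv => by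
    obtain ⟨u, hu, i, hi0, hiΔ, rfl⟩ :=
      exists_mem_false_add_of_dominating hD (mem_filter.1 hv).2.1 (mem_filter.1 hv).2.2
    exact mem_add.2
      ⟨u, by simpa [U] using hu, i, mem_image_of_mem _ (mem_Ico.2 ⟨hi0, hiΔ⟩), rfl⟩
  have hcardB : #B ≤ (Δ - 1) * #U :=
    calc #B ≤ #U * #((Ico 1 Δ).image (Nat.cast : ℕ → ZMod n)) :=
          (card_le_card hBU).trans card_add_le
      _ ≤ #U * (Δ - 1) := Nat.mul_le_mul_left _ (card_image_le.trans (Nat.card_Ico 1 Δ).le)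
      _ = (Δ - 1) * #U := Nat.mul_comm _ _
  have hdisj : Disjoint U B := disjoint_filter.2 fun _ _ hu hB => hB.1 hu
  have hUB : #U + #B ≤ n := by
    simpa [← card_union_of_disjoint hdisj] using card_le_univ (U ∪ B)
  obtain ⟨q, hqn, hBq⟩ := exists_two_mul_le_of_le_mul hcardB hUB
  obtain ⟨I, hI, rfl⟩ := cycleGraph_exists_indep_card_eq hqn
  exact ⟨⟨I, hI, hBq⟩, by simpa using card_sub_card_le_card_filter_not_mem D⟩

/-- If `D` is a dominating set of `G(Δ, n)` (`Δ ≥ 2`, `n ≥ Δ + 1`) and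
`B = {v : (v, false) ∉ D ∧ (v, true) ∉ D}`, then `C_n` has an independent set
`I` with `(Δ - 1) * |I| ≥ |B|`; moreover `|B| ≥ n - |D|`. -/
theorem double_cycle_dominating_to_independent (Δ n : ℕ) [NeZero n]
    (hΔ : 2 ≤ Δ) (hn : Δ + 1 ≤ n)
    (D : Finset (ZMod n × Bool))
    (hD : ∀ v : ZMod n × Bool, v ∈ D ∨ ∃ u ∈ D, (doubleCycle Δ n).Adj v u) :
    let B : Finset (ZMod n) :=
      Finset.univ.filter (fun v : ZMod n => (v, false) ∉ D ∧ (v, true) ∉ D)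
    (∃ I : Finset (ZMod n),
      (∀ u ∈ I, ∀ v ∈ I, ¬ (cycleGraph n).Adj u v) ∧
      B.card ≤ (Δ - 1) * I.card) ∧
    n - D.card ≤ B.card :=
  double_cycle_dominating_to_independent_general Δ n D hD
end

section
/- Let Δ ≥ 2 and let n ≥ 4 be even. Then the layered cycle graph H(Δ, n) has a perfect matching; in particular it has a matching with (Δ + 1)·n/2 edges. -/
/-- The layered cycle graph `H(Δ, n)` on `(ZMod n) × Fin (Δ + 1)`: `(v, 0)` is
adjacent to `(v, i)` for every `i ∈ {1, …, Δ}`, and for `i ∈ {1, …, Δ}`,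
`(u, i)` is adjacent to `(v, i)` iff `v = u + 1` or `u = v + 1`. -/
def layeredCycle (Δ n : ℕ) : SimpleGraph (ZMod n × Fin (Δ + 1)) :=
  SimpleGraph.fromRel (fun a b =>
    (a.2 = 0 ∧ b.2 ≠ 0 ∧ a.1 = b.1) ∨
    (a.2 = b.2 ∧ a.2 ≠ 0 ∧ b.1 = a.1 + 1))

/-- The pairing map used to build the perfect matching. -/
def lcPhi (Δ n : ℕ) [NeZero n] (x : ZMod n × Fin (Δ + 1)) : ZMod n × Fin (Δ + 1) :=
  if x.2 = 0 then (x.1, 1)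
  else if x.2 = 1 then (x.1, 0)
  else if x.1.val % 2 = 0 then (x.1 + 1, x.2) else (x.1 - 1, x.2)

section Aux

variable {Δ n : ℕ} [NeZero n]

lemma lc_val_succ (hn : 4 ≤ n) (heven : Even n) (v : ZMod n) (hv : v.val % 2 = 0) :
    (v + 1).val = v.val + 1 := by
  have h1 : (1 : ZMod n).val = 1 := ZMod.val_one'' (by omega)
  have hlt : v.val < n := ZMod.val_lt v
  have : v.val + 1 < n := by
    rcases heven with ⟨k, hk⟩
    omega
  rw [ZMod.val_add_of_lt (by rw [h1]; exact this), h1]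

lemma lc_val_pred (hn : 4 ≤ n) (v : ZMod n) (hv : v.val % 2 = 1) :
    (v - 1).val = v.val - 1 := by
  have h1 : (1 : ZMod n).val = 1 := ZMod.val_one'' (by omega)
  rw [ZMod.val_sub (by omega), h1]

lemma lcPhi_involutive (hΔ : 2 ≤ Δ) (hn : 4 ≤ n) (heven : Even n)
    (x : ZMod n × Fin (Δ + 1)) : lcPhi Δ n (lcPhi Δ n x) = x := by
  have h01 : (1 : Fin (Δ + 1)) ≠ 0 := by
    have hv : (1 : Fin (Δ + 1)).val = 1 % (Δ + 1) := rfl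
    have hm : 1 % (Δ + 1) = 1 := Nat.mod_eq_of_lt (by omega)
    simp only [Fin.ne_iff_vne, hv, hm, Fin.val_zero]
    omega
  obtain ⟨v, i⟩ := x
  by_cases h0 : i = 0
  · simp [lcPhi, h0, h01]
  · by_cases h1 : i = 1
    · simp [lcPhi, h0, h1, h01]
    · by_cases hp : v.val % 2 = 0
      · have hs := lc_val_succ hn heven v hp
        have : (v + 1).val % 2 = 1 := by omega
        simp [lcPhi, h0, h1, hp, this]
      · have hp' : v.val % 2 = 1 := by omega
        have hs := lc_val_pred hn v hp'
        have hv1 : 1 ≤ v.val := by omega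
        have : (v - 1).val % 2 = 0 := by omega
        simp [lcPhi, h0, h1, hp', this, sub_add_cancel]

lemma lcPhi_ne (hΔ : 2 ≤ Δ) (hn : 4 ≤ n) (x : ZMod n × Fin (Δ + 1)) :
    lcPhi Δ n x ≠ x := by
  have h01 : (1 : Fin (Δ + 1)) ≠ 0 := by
    have hv : (1 : Fin (Δ + 1)).val = 1 % (Δ + 1) := rfl
    have hm : 1 % (Δ + 1) = 1 := Nat.mod_eq_of_lt (by omega)
    simp only [Fin.ne_iff_vne, hv, hm, Fin.val_zero]
    omega
  have hone : (1 : ZMod n) ≠ 0 := by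
    have : (1 : ZMod n).val = 1 := ZMod.val_one'' (by omega)
    intro h; rw [h] at this; simp at this
  obtain ⟨v, i⟩ := x
  by_cases h0 : i = 0
  · simp [lcPhi, h0, Prod.ext_iff, h01]
  · by_cases h1 : i = 1
    · simp [lcPhi, h0, h1, Prod.ext_iff, Ne.symm h01]; omega
    · by_cases hp : v.val % 2 = 0
      · simp only [lcPhi, h0, h1, hp, if_false, if_true, ne_eq, Prod.mk.injEq, not_and]
        intro h
        exact absurd (by linear_combination h) hone
      · simp only [lcPhi, h0, h1, hp, if_false, ne_eq, Prod.mk.injEq, not_and]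
        intro h
        exact absurd (by linear_combination -h) hone

lemma lcPhi_adj (hΔ : 2 ≤ Δ) (hn : 4 ≤ n) (x : ZMod n × Fin (Δ + 1)) :
    (layeredCycle Δ n).Adj x (lcPhi Δ n x) := by
  have h01 : (1 : Fin (Δ + 1)) ≠ 0 := by
    have hv : (1 : Fin (Δ + 1)).val = 1 % (Δ + 1) := rfl
    have hm : 1 % (Δ + 1) = 1 := Nat.mod_eq_of_lt (by omega)
    simp only [Fin.ne_iff_vne, hv, hm, Fin.val_zero]
    omega
  refine ⟨(lcPhi_ne hΔ hn x).symm, ?_⟩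
  obtain ⟨v, i⟩ := x
  by_cases h0 : i = 0
  · left; simp [lcPhi, h0, h01]
  · by_cases h1 : i = 1
    · right; left; simp [lcPhi, h0, h1, h01, h1 ▸ h0]
    · by_cases hp : v.val % 2 = 0
      · left; right; simp [lcPhi, h0, h1, hp]
      · right; right; simp [lcPhi, h0, h1, hp]
end Aux

/-- If `Δ ≥ 2` and `n ≥ 4` is even, then `H(Δ, n)` has a perfect matching; in
particular a matching with `(Δ + 1) * n / 2` edges. -/
theorem layered_cycle_perfect_matching (Δ n : ℕ) [NeZero n] (hΔ : 2 ≤ Δ)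
    (hn : 4 ≤ n) (heven : Even n) :
    ∃ M : Finset (Sym2 (ZMod n × Fin (Δ + 1))),
      (∀ e ∈ M, e ∈ (layeredCycle Δ n).edgeSet) ∧
      ((M : Set (Sym2 (ZMod n × Fin (Δ + 1)))).Pairwise
        fun e f => ∀ v : ZMod n × Fin (Δ + 1), v ∈ e → v ∉ f) ∧
      (∀ v : ZMod n × Fin (Δ + 1), ∃ e ∈ M, v ∈ e) ∧
      2 * M.card = (Δ + 1) * n := by
  classical
  set φ := lcPhi Δ n with hφ
  have hinv : ∀ x, φ (φ x) = x := lcPhi_involutive hΔ hn heven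
  have hne : ∀ x, φ x ≠ x := lcPhi_ne hΔ hn
  set f : ZMod n × Fin (Δ + 1) → Sym2 (ZMod n × Fin (Δ + 1)) := fun v => s(v, φ v) with hf
  have hkey : ∀ a x : ZMod n × Fin (Δ + 1), f x = f a ↔ x = a ∨ x = φ a := by
    intro a x
    constructor
    · intro h
      rcases Sym2.eq_iff.mp h with ⟨h1, _⟩ | ⟨h1, _⟩
      · exact Or.inl h1
      · exact Or.inr h1
    · rintro (rfl | rfl)
      · rfl
      · simp only [hf]
        rw [hinv a, Sym2.eq_swap]
  refine ⟨Finset.univ.image f, ?_, ?_, ?_, ?_⟩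
  · intro e he
    obtain ⟨v, -, rfl⟩ := Finset.mem_image.mp he
    exact (layeredCycle Δ n).mem_edgeSet.mpr (lcPhi_adj hΔ hn v)
  · intro e he fe hfe hef v hv hv'
    obtain ⟨a, -, rfl⟩ := Finset.mem_image.mp (Finset.mem_coe.mp he)
    obtain ⟨b, -, rfl⟩ := Finset.mem_image.mp (Finset.mem_coe.mp hfe)
    have h1 : f a = f v := by
      rcases Sym2.mem_iff.mp hv with rfl | h
      · rfl
      · rw [h]; exact ((hkey a (φ a)).mpr (Or.inr rfl)).symm
    have h2 : f b = f v := by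
      rcases Sym2.mem_iff.mp hv' with rfl | h
      · rfl
      · rw [h]; exact ((hkey b (φ b)).mpr (Or.inr rfl)).symm
    exact hef (h1.trans h2.symm)
  · intro v
    exact ⟨f v, Finset.mem_image_of_mem f (Finset.mem_univ v), Sym2.mem_mk_left _ _⟩
  · have hcard := Finset.card_eq_sum_card_image f Finset.univ
    have hfib : ∀ e ∈ Finset.univ.image f,
        (Finset.univ.filter (fun v => f v = e)).card = 2 := by
      intro e he
      obtain ⟨a, -, rfl⟩ := Finset.mem_image.mp he
      have : Finset.univ.filter (fun v => f v = f a) = {a, φ a} := by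
        ext x
        simp [hkey a x]
      rw [this, Finset.card_pair (Ne.symm (hne a))]
    have hsum : (Finset.univ : Finset (ZMod n × Fin (Δ + 1))).card
        = (Finset.univ.image f).card * 2 := by
      rw [hcard, Finset.sum_congr rfl hfib, Finset.sum_const, smul_eq_mul]
    have huniv : (Finset.univ : Finset (ZMod n × Fin (Δ + 1))).card = n * (Δ + 1) := by
      simp [Finset.card_univ, ZMod.card]
    calc 2 * (Finset.univ.image f).card = (Finset.univ.image f).card * 2 := by ring
      _ = (Finset.univ : Finset (ZMod n × Fin (Δ + 1))).card := hsum.symm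
      _ = n * (Δ + 1) := huniv
      _ = (Δ + 1) * n := mul_comm _ _
end

section
/- Let Δ ≥ 2, n ≥ 3, and let M be a matching in the layered cycle graph H(Δ, n). For each i ∈ {1, …, Δ} let I_i = { u ∈ ZMod n : the edge {(u, i), (u + 1, i)} belongs to M }. Then each I_i is an independent set of the cycle graph C_n, and the sum over i = 1, …, Δ of |I_i| is at least |M| − n. -/
/-- Given a matching `M` of `H(Δ, n)` (`Δ ≥ 2`, `n ≥ 3`), let
`I_i = {u : s((u, i), (u + 1, i)) ∈ M}` for `i ∈ {1, …, Δ}`. Then each `I_i`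
is an independent set of `C_n` and `∑_{i=1}^{Δ} |I_i| ≥ |M| - n`. -/
theorem layered_cycle_matching_to_independent (Δ n : ℕ) [NeZero n]
    (hΔ : 2 ≤ Δ) (hn : 3 ≤ n)
    (M : Finset (Sym2 (ZMod n × Fin (Δ + 1))))
    (hM1 : ∀ e ∈ M, e ∈ (layeredCycle Δ n).edgeSet)
    (hM2 : (M : Set (Sym2 (ZMod n × Fin (Δ + 1)))).Pairwise
      fun e f => ∀ v : ZMod n × Fin (Δ + 1), v ∈ e → v ∉ f) :
    let I : Fin (Δ + 1) → Finset (ZMod n) := fun i =>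
      Finset.univ.filter (fun u : ZMod n => s((u, i), (u + 1, i)) ∈ M)
    (∀ i : Fin (Δ + 1), i ≠ 0 →
      ∀ u ∈ I i, ∀ v ∈ I i, ¬ (cycleGraph n).Adj u v) ∧
    M.card - n ≤ ∑ i ∈ Finset.univ.filter (fun i : Fin (Δ + 1) => i ≠ 0), (I i).card := by
  classical
  intro I
  have h2 : (2 : ZMod n) ≠ 0 := by
    have : ¬ (n ∣ 2) := fun h => by have := Nat.le_of_dvd (by norm_num) h; omega
    intro hc
    exact this ((ZMod.natCast_eq_zero_iff 2 n).1 (by exact_mod_cast hc))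
  have h1 : (1 : ZMod n) ≠ 0 := by
    have : ¬ (n ∣ 1) := fun h => by have := Nat.le_of_dvd (by norm_num) h; omega
    intro hc
    exact this ((ZMod.natCast_eq_zero_iff 1 n).1 (by exact_mod_cast hc))
  constructor
  · -- independence
    intro i hi u hu v hv hadj
    simp only [I, Finset.mem_filter] at hu hv
    obtain ⟨-, hu⟩ := hu
    obtain ⟨-, hv⟩ := hv
    rw [cycleGraph, SimpleGraph.fromRel_adj] at hadj
    obtain ⟨hne, h | h⟩ := hadj
    · subst h
      have hne' : s((u, i), (u + 1, i)) ≠ s((u + 1, i), (u + 1 + 1, i)) := by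
        intro hc
        rw [Sym2.eq_iff] at hc
        rcases hc with ⟨h1', _⟩ | ⟨h1', _⟩
        · exact hne (congrArg Prod.fst h1')
        · have : u = u + 2 := by
            have := congrArg Prod.fst h1'
            simpa [add_assoc, one_add_one_eq_two] using this
          exact h2 (by linear_combination -this)
      exact hM2 (Finset.mem_coe.2 hu) (Finset.mem_coe.2 hv) hne' (u + 1, i)
        (Sym2.mem_mk_right _ _) (Sym2.mem_mk_left _ _)
    · subst h
      have hne' : s((v + 1, i), (v + 1 + 1, i)) ≠ s((v, i), (v + 1, i)) := by
        intro hc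
        rw [Sym2.eq_iff] at hc
        rcases hc with ⟨h1', _⟩ | ⟨_, h2'⟩
        · have : v + 1 = v := congrArg Prod.fst h1'
          exact h1 (by linear_combination this)
        · have : v + 1 + 1 = v := congrArg Prod.fst h2'
          exact h2 (by linear_combination this)
      exact hM2 (Finset.mem_coe.2 hu) (Finset.mem_coe.2 hv) hne' (v + 1, i)
        (Sym2.mem_mk_left _ _) (Sym2.mem_mk_right _ _)
  · -- cardinality
    set S : Finset (Sym2 (ZMod n × Fin (Δ + 1))) :=
      M.filter (fun e => ∃ v : ZMod n, ((v, (0 : Fin (Δ + 1))) ∈ e)) with hS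
    set T : Fin (Δ + 1) → Finset (Sym2 (ZMod n × Fin (Δ + 1))) :=
      fun i => (I i).image (fun u => s((u, i), (u + 1, i))) with hT
    have hScard : S.card ≤ n := by
      have hinj : Set.InjOn
          (fun e => if h : ∃ v : ZMod n, ((v, (0 : Fin (Δ + 1))) ∈ e) then h.choose else 0)
          (S : Set (Sym2 (ZMod n × Fin (Δ + 1)))) := by
        intro e he f hf hef
        simp only [hS, Finset.coe_filter, Set.mem_setOf_eq] at he hf
        obtain ⟨heM, hev⟩ := he
        obtain ⟨hfM, hfv⟩ := hf
        simp only [dif_pos hev, dif_pos hfv] at hef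
        by_contra hne
        refine hM2 (Finset.mem_coe.2 heM) (Finset.mem_coe.2 hfM) hne
          (hev.choose, (0 : Fin (Δ + 1))) hev.choose_spec ?_
        rw [hef]
        exact hfv.choose_spec
      have := Finset.card_le_card_of_injOn
        (fun e => if h : ∃ v : ZMod n, ((v, (0 : Fin (Δ + 1))) ∈ e) then h.choose else 0)
        (fun a _ => Finset.mem_univ _) hinj
      simpa [ZMod.card n] using this
    have hsub : M ⊆ S ∪ (Finset.univ.filter (fun i : Fin (Δ + 1) => i ≠ 0)).biUnion T := by
      intro e he
      have hadj := hM1 e he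
      induction e using Sym2.ind with
      | _ a b =>
        rw [SimpleGraph.mem_edgeSet, layeredCycle, SimpleGraph.fromRel_adj] at hadj
        obtain ⟨hab, hc⟩ := hadj
        rw [Finset.mem_union]
        rcases hc with (⟨ha0, hb0, hab1⟩ | ⟨hab2, ha0, hb1⟩) | (⟨hb0, ha0, hab1⟩ | ⟨hab2, hb0, hb1⟩)
        · left
          refine Finset.mem_filter.2 ⟨he, a.1, ?_⟩
          have : a = (a.1, (0 : Fin (Δ + 1))) := by
            ext <;> simp [ha0]
          rw [← this]
          exact Sym2.mem_mk_left _ _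
        · right
          refine Finset.mem_biUnion.2 ⟨a.2, Finset.mem_filter.2 ⟨Finset.mem_univ _, ha0⟩, ?_⟩
          refine Finset.mem_image.2 ⟨a.1, ?_, ?_⟩
          · refine Finset.mem_filter.2 ⟨Finset.mem_univ _, ?_⟩
            have : s((a.1, a.2), (a.1 + 1, a.2)) = s(a, b) := by
              congr 1
              ext <;> simp [hb1, hab2]
            rw [this]; exact he
          · have : s((a.1, a.2), (a.1 + 1, a.2)) = s(a, b) := by
              congr 1
              ext <;> simp [hb1, hab2]
            exact this
        · left
          refine Finset.mem_filter.2 ⟨he, b.1, ?_⟩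
          have : b = (b.1, (0 : Fin (Δ + 1))) := by
            ext <;> simp [hb0]
          rw [← this]
          exact Sym2.mem_mk_right _ _
        · right
          refine Finset.mem_biUnion.2 ⟨b.2, Finset.mem_filter.2 ⟨Finset.mem_univ _, hb0⟩, ?_⟩
          refine Finset.mem_image.2 ⟨b.1, ?_, ?_⟩
          · refine Finset.mem_filter.2 ⟨Finset.mem_univ _, ?_⟩
            have : s((b.1, b.2), (b.1 + 1, b.2)) = s(a, b) := by
              rw [Sym2.eq_swap]
              congr 1
              ext <;> simp [hb1, hab2]
            rw [this]; exact he
          · have : s((b.1, b.2), (b.1 + 1, b.2)) = s(a, b) := by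
              rw [Sym2.eq_swap]
              congr 1
              ext <;> simp [hb1, hab2]
            exact this
    have hcard : M.card ≤ n +
        ∑ i ∈ Finset.univ.filter (fun i : Fin (Δ + 1) => i ≠ 0), (I i).card := by
      calc M.card ≤ (S ∪ (Finset.univ.filter (fun i : Fin (Δ + 1) => i ≠ 0)).biUnion T).card :=
            Finset.card_le_card hsub
        _ ≤ S.card + ((Finset.univ.filter (fun i : Fin (Δ + 1) => i ≠ 0)).biUnion T).card :=
            Finset.card_union_le _ _
        _ ≤ S.card + ∑ i ∈ Finset.univ.filter (fun i : Fin (Δ + 1) => i ≠ 0), (T i).card :=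
            Nat.add_le_add_left (Finset.card_biUnion_le) _
        _ ≤ n + ∑ i ∈ Finset.univ.filter (fun i : Fin (Δ + 1) => i ≠ 0), (I i).card := by
            exact Nat.add_le_add hScard
              (Finset.sum_le_sum fun i _ => Finset.card_image_le)
    omega
end

section
/- Let Δ ≥ 1 be odd and let G be a finite simple graph in which every vertex has degree at most Δ. Let A be the set of vertices of odd degree, B the set of vertices of even degree having at least one neighbour in A, and C the set of all remaining vertices. Then every dominating set D of G satisfies Δ·(Δ + 1)·|D| ≥ Δ·(|A| + |B|) + (Δ + 1)·|C|, i.e., |D| ≥ (|A| + |B|)/(Δ + 1) + |C|/Δ. -/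
/-- Let `Δ ≥ 1` be odd and `G` have maximum degree at most `Δ`. Let `A` be the
odd-degree vertices, `B` the even-degree vertices with a neighbour in `A`, and
`C` the rest. Then every dominating set `D` satisfies
`Δ * (Δ + 1) * |D| ≥ Δ * (|A| + |B|) + (Δ + 1) * |C|`. -/
theorem dominating_set_odd_degree_bound {V : Type*} [Fintype V] [DecidableEq V]
    (G : SimpleGraph V) [DecidableRel G.Adj]
    (Δ : ℕ) (hΔ : 1 ≤ Δ) (hodd : Odd Δ)
    (hdeg : ∀ v : V, G.degree v ≤ Δ)
    (D : Finset V) (hD : ∀ v : V, v ∈ D ∨ ∃ u ∈ D, G.Adj v u) :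
    let A : Finset V := Finset.univ.filter (fun v => Odd (G.degree v))
    let B : Finset V := Finset.univ.filter
      (fun v => Even (G.degree v) ∧ ∃ u ∈ A, G.Adj v u)
    let C : Finset V := Finset.univ \ (A ∪ B)
    Δ * (A.card + B.card) + (Δ + 1) * C.card ≤ Δ * (Δ + 1) * D.card := by
  intro A B C
  classical
  set w : V → ℕ := fun v => if v ∈ C then Δ + 1 else Δ with hw
  -- characterization of C
  have hC : ∀ v : V, v ∈ C ↔ Even (G.degree v) ∧ ∀ u, G.Adj v u → Even (G.degree u) := by
    intro v
    simp only [C, A, B, Finset.mem_sdiff, Finset.mem_union, Finset.mem_filter,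
      Finset.mem_univ, true_and]
    push_neg
    constructor
    · rintro ⟨h1, h2⟩
      have hev : Even (G.degree v) := Nat.not_odd_iff_even.mp h1
      refine ⟨hev, fun u hu => ?_⟩
      by_contra hodd'
      exact (h2 hev u (Nat.not_even_iff_odd.mp hodd')) hu
    · rintro ⟨h1, h2⟩
      exact ⟨Nat.not_odd_iff_even.mpr h1, fun _ u hu hadj =>
        (Nat.not_even_iff_odd.mpr hu) (h2 u hadj)⟩
  -- disjointness facts
  have hAB : Disjoint A B := by
    rw [Finset.disjoint_left]
    intro v hvA hvB
    simp only [A, B, Finset.mem_filter, Finset.mem_univ, true_and] at hvA hvB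
    exact (Nat.not_even_iff_odd.mpr hvA) hvB.1
  have hABC : Disjoint (A ∪ B) C := Finset.disjoint_sdiff
  -- the LHS equals the total weight
  have huniv : (A ∪ B) ∪ C = Finset.univ :=
    Finset.union_sdiff_of_subset (Finset.subset_univ _)
  have hsum : Δ * (A.card + B.card) + (Δ + 1) * C.card = ∑ v, w v := by
    rw [← huniv, Finset.sum_union hABC]
    have h1 : ∑ v ∈ A ∪ B, w v = (A ∪ B).card * Δ := by
      rw [Finset.sum_congr rfl (fun v hv => ?_), Finset.sum_const, smul_eq_mul]
      have : v ∉ C := Finset.disjoint_left.mp hABC hv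
      simp [w, this]
    have h2 : ∑ v ∈ C, w v = C.card * (Δ + 1) := by
      rw [Finset.sum_congr rfl (fun v hv => ?_), Finset.sum_const, smul_eq_mul]
      simp [w, hv]
    rw [h1, h2, Finset.card_union_of_disjoint hAB]
    ring
  -- choose a dominator for each vertex
  have hdom : ∀ v : V, ∃ d, d ∈ D ∧ (v = d ∨ G.Adj v d) := by
    intro v
    rcases hD v with h | ⟨u, hu, hadj⟩
    · exact ⟨v, h, Or.inl rfl⟩
    · exact ⟨u, hu, Or.inr hadj⟩
  choose dom hdomD hdomAdj using hdom
  -- fiber decomposition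
  have hfib : ∑ d ∈ D, ∑ v ∈ Finset.univ.filter (fun v => dom v = d), w v = ∑ v, w v :=
    Finset.sum_fiberwise_of_maps_to (fun v _ => hdomD v) w
  -- bound each fiber
  have key : ∀ d : V, ∑ v ∈ Finset.univ.filter (fun v => dom v = d), w v ≤ Δ * (Δ + 1) := by
    intro d
    set F := Finset.univ.filter (fun v => dom v = d) with hF
    set N := insert d (G.neighborFinset d) with hN
    have hFsub : F ⊆ N := by
      intro v hv
      simp only [hF, Finset.mem_filter, Finset.mem_univ, true_and] at hv
      rcases hdomAdj v with h | h
      · rw [hv] at h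
        exact Finset.mem_insert.mpr (Or.inl h)
      · rw [hv] at h
        exact Finset.mem_insert.mpr (Or.inr ((G.mem_neighborFinset d v).mpr h.symm))
    have hNcard : N.card ≤ G.degree d + 1 := by
      rw [hN, ← G.card_neighborFinset_eq_degree]
      exact Finset.card_insert_le _ _
    by_cases hc : ∃ v ∈ N, v ∈ C
    · -- d has even degree, so degree ≤ Δ - 1
      have hev : Even (G.degree d) := by
        obtain ⟨v, hvN, hvC⟩ := hc
        rcases Finset.mem_insert.mp hvN with rfl | hvn
        · exact ((hC v).mp hvC).1
        · exact ((hC v).mp hvC).2 d ((G.mem_neighborFinset d v).mp hvn).symm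
      have hdd : G.degree d + 1 ≤ Δ := by
        have h1 := hdeg d
        rcases eq_or_lt_of_le h1 with h2 | h2
        · exfalso
          rw [h2] at hev
          exact (Nat.not_even_iff_odd.mpr hodd) hev
        · omega
      have hcard : F.card ≤ Δ := le_trans (Finset.card_le_card hFsub) (by omega)
      calc ∑ v ∈ F, w v ≤ F.card * (Δ + 1) := by
            apply Finset.sum_le_card_nsmul
            intro v _
            simp only [w]
            split <;> omega
        _ ≤ Δ * (Δ + 1) := Nat.mul_le_mul_right _ hcard
    · push_neg at hc
      have hwΔ : ∀ v ∈ F, w v = Δ := by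
        intro v hv
        have : v ∉ C := hc v (hFsub hv)
        simp [w, this]
      have hcard : F.card ≤ Δ + 1 := le_trans (Finset.card_le_card hFsub)
        (by have := hdeg d; omega)
      calc ∑ v ∈ F, w v = F.card * Δ := by
            rw [Finset.sum_congr rfl hwΔ, Finset.sum_const, smul_eq_mul]
        _ ≤ (Δ + 1) * Δ := Nat.mul_le_mul_right _ hcard
        _ = Δ * (Δ + 1) := mul_comm _ _
  calc Δ * (A.card + B.card) + (Δ + 1) * C.card = ∑ v, w v := hsum
    _ = ∑ d ∈ D, ∑ v ∈ Finset.univ.filter (fun v => dom v = d), w v := hfib.symm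
    _ ≤ D.card * (Δ * (Δ + 1)) := Finset.sum_le_card_nsmul _ _ _ (fun d _ => key d)
    _ = Δ * (Δ + 1) * D.card := mul_comm _ _
end

section
/- Let M be a matching in a finite simple graph G and let P be an M-augmenting path with edge set E_P. Then the symmetric difference M △ E_P is a matching in G and |M △ E_P| = |M| + 1. -/
open SimpleGraph

lemma aux_getVert_eq_support {V : Type*} {G : SimpleGraph V} {u v : V}
    (p : G.Walk u v) (i : ℕ) (hi : i ≤ p.length) :
    p.getVert i = p.support[i]'(by rw [Walk.length_support]; omega) := by
  induction p generalizing i with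
  | nil =>
    obtain rfl : i = 0 := by simpa using hi
    simp [Walk.getVert]
  | cons h q ih =>
    cases i with
    | zero => simp [Walk.getVert]
    | succ n =>
      simp only [Walk.support_cons, Walk.getVert_cons_succ, List.getElem_cons_succ]
      exact ih n (by simpa using hi)

lemma aux_edges_getElem {V : Type*} {G : SimpleGraph V} {u v : V}
    (p : G.Walk u v) (j : ℕ) (hj : j < p.edges.length) :
    p.edges[j]'hj = s(p.getVert j, p.getVert (j + 1)) := by
  induction p generalizing j with
  | nil => simp at hj
  | cons h q ih =>
    cases j with
    | zero =>
      simp only [Walk.edges_cons, List.getElem_cons_zero, Walk.getVert_zero,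
        Walk.getVert_cons_succ]
    | succ n =>
      simp only [Walk.edges_cons, List.getElem_cons_succ, Walk.getVert_cons_succ]
      exact ih n (by simpa using hj)

lemma aux_getVert_inj {V : Type*} {G : SimpleGraph V} {u v : V}
    {p : G.Walk u v} (hp : p.IsPath) {i j : ℕ} (hi : i ≤ p.length)
    (hj : j ≤ p.length) (h : p.getVert i = p.getVert j) : i = j := by
  rw [aux_getVert_eq_support p i hi, aux_getVert_eq_support p j hj] at h
  exact (hp.support_nodup.getElem_inj_iff).1 h

lemma aux_card_odd_range (n : ℕ) :
    ((Finset.range n).filter (fun j => Odd j)).card = n / 2 := by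
  induction n with
  | zero => simp
  | succ n ih =>
    rw [Finset.range_add_one, Finset.filter_insert]
    by_cases h : Odd n
    · rw [if_pos h, Finset.card_insert_of_notMem (by simp), ih]
      have := Nat.odd_iff.1 h
      omega
    · rw [if_neg h, ih]
      have := Nat.not_odd_iff.1 h
      omega

lemma aux_card_filter_list {α : Type*} [DecidableEq α] (L : List α)
    (hL : L.Nodup) (P : α → Prop) [DecidablePred P] (Q : ℕ → Prop) [DecidablePred Q]
    (h : ∀ j (hj : j < L.length), P (L[j]'hj) ↔ Q j) :
    (L.toFinset.filter P).card = ((Finset.range L.length).filter Q).card := by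
  refine (Finset.card_bij
    (fun j hj => L[j]'(Finset.mem_range.1 (Finset.mem_filter.1 hj).1)) ?_ ?_ ?_).symm
  · intro j hj
    obtain ⟨hj1, hj2⟩ := Finset.mem_filter.1 hj
    have hlt := Finset.mem_range.1 hj1
    exact Finset.mem_filter.2 ⟨List.mem_toFinset.2 (List.getElem_mem _),
      (h j hlt).2 hj2⟩
  · intro a ha b hb hab
    exact (hL.getElem_inj_iff).1 hab
  · intro e he
    obtain ⟨he1, he2⟩ := Finset.mem_filter.1 he
    obtain ⟨j, hlt, rfl⟩ := List.getElem_of_mem (List.mem_toFinset.1 he1)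
    exact ⟨j, Finset.mem_filter.2 ⟨Finset.mem_range.2 hlt, (h j hlt).1 he2⟩, rfl⟩

/-- `p` is an `M`-augmenting path: a path of odd length whose endpoints are
unmatched by `M` and whose edges are alternately outside `M` (the first, third,
… edges) and inside `M` (the second, fourth, … edges). -/
def IsAugmentingPath {V : Type*} (G : SimpleGraph V) (M : Finset (Sym2 V))
    {u v : V} (p : G.Walk u v) : Prop :=
  p.IsPath ∧ Odd p.length ∧
    (∀ e ∈ M, u ∉ e) ∧ (∀ e ∈ M, v ∉ e) ∧
    ∀ (j : ℕ) (h : j < p.edges.length), ((p.edges[j]'h) ∈ M ↔ Odd j)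

/-- Augmenting a matching `M` along an `M`-augmenting path `P`: the symmetric
difference `M ∆ E_P` is a matching of size `|M| + 1`. -/
theorem augment_along_path {V : Type*} [Fintype V] [DecidableEq V]
    (G : SimpleGraph V)
    (M : Finset (Sym2 V))
    (hM1 : ∀ e ∈ M, e ∈ G.edgeSet)
    (hM2 : (M : Set (Sym2 V)).Pairwise fun e f => ∀ v : V, v ∈ e → v ∉ f)
    {u v : V} (p : G.Walk u v) (hp : IsAugmentingPath G M p) :
    (∀ e ∈ symmDiff M p.edges.toFinset, e ∈ G.edgeSet) ∧
    ((symmDiff M p.edges.toFinset : Set (Sym2 V)).Pairwise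
      fun e f => ∀ w : V, w ∈ e → w ∉ f) ∧
    (symmDiff M p.edges.toFinset).card = M.card + 1 := by
  obtain ⟨hpath, hodd, hu, hv, halt⟩ := hp
  have hnodup : p.edges.Nodup := hpath.isTrail.edges_nodup
  set E := p.edges.toFinset with hE
  -- the crossing lemma: an edge of `M` outside the path cannot meet the path
  have cross : ∀ e ∈ M, e ∉ E → ∀ f ∈ E, ∀ w : V, w ∈ e → w ∈ f → False := by
    intro e heM heE f hfE w hwe hwf
    obtain ⟨j, hj, rfl⟩ := List.getElem_of_mem (List.mem_toFinset.1 hfE)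
    have hj' : j < p.length := p.length_edges ▸ hj
    rw [aux_edges_getElem p j hj, Sym2.mem_iff] at hwf
    have key : ∀ i, i ≤ p.length → w = p.getVert i → False := by
      intro i hi hw
      rcases Nat.eq_zero_or_pos i with h0 | h0
      · subst h0
        rw [p.getVert_zero] at hw
        exact hu e heM (hw ▸ hwe)
      rcases eq_or_lt_of_le hi with hN | hN
      · rw [hN, p.getVert_length] at hw
        exact hv e heM (hw ▸ hwe)
      -- 0 < i < p.length : one of the edges i-1, i is odd-indexed, hence in M
      rcases Nat.even_or_odd i with hev | hod
      · -- use edge i - 1, which has odd index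
        have hlt : i - 1 < p.edges.length := by rw [p.length_edges]; omega
        have hmM : p.edges[i-1]'hlt ∈ M := by
          refine (halt _ hlt).2 ?_
          rcases hev with ⟨c, hc⟩
          exact ⟨c - 1, by omega⟩
        have hwm : w ∈ p.edges[i-1]'hlt := by
          rw [aux_edges_getElem p _ hlt, Sym2.mem_iff]
          right
          rw [Nat.sub_add_cancel h0]
          exact hw
        have hmE : p.edges[i-1]'hlt ∈ E := List.mem_toFinset.2 (List.getElem_mem _)
        have hne : p.edges[i-1]'hlt ≠ e := fun h => heE (h ▸ hmE)
        exact hM2 (Finset.mem_coe.2 hmM) (Finset.mem_coe.2 heM) hne w hwm hwe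
      · -- use edge i, which has odd index
        have hlt : i < p.edges.length := by rw [p.length_edges]; omega
        have hmM : p.edges[i]'hlt ∈ M := (halt _ hlt).2 hod
        have hwm : w ∈ p.edges[i]'hlt := by
          rw [aux_edges_getElem p _ hlt, Sym2.mem_iff]
          exact Or.inl hw
        have hmE : p.edges[i]'hlt ∈ E := List.mem_toFinset.2 (List.getElem_mem _)
        have hne : p.edges[i]'hlt ≠ e := fun h => heE (h ▸ hmE)
        exact hM2 (Finset.mem_coe.2 hmM) (Finset.mem_coe.2 heM) hne w hwm hwe
    rcases hwf with hw | hw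
    · exact key j (by omega) hw
    · exact key (j + 1) (by omega) hw
  -- two distinct path edges outside M are vertex-disjoint (both even-indexed)
  have pairE : ∀ e ∈ E, e ∉ M → ∀ f ∈ E, f ∉ M → e ≠ f →
      ∀ w : V, w ∈ e → w ∈ f → False := by
    intro e heE heM f hfE hfM hne w hwe hwf
    obtain ⟨i, hi, rfl⟩ := List.getElem_of_mem (List.mem_toFinset.1 heE)
    obtain ⟨j, hj, rfl⟩ := List.getElem_of_mem (List.mem_toFinset.1 hfE)
    have hi' : i < p.length := p.length_edges ▸ hi
    have hj' : j < p.length := p.length_edges ▸ hj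
    have hie : i % 2 = 0 := Nat.not_odd_iff.1 fun h => heM ((halt i hi).2 h)
    have hje : j % 2 = 0 := Nat.not_odd_iff.1 fun h => hfM ((halt j hj).2 h)
    have hij : i ≠ j := fun h => hne (by subst h; rfl)
    rw [aux_edges_getElem p i hi, Sym2.mem_iff] at hwe
    rw [aux_edges_getElem p j hj, Sym2.mem_iff] at hwf
    rcases hwe with rfl | rfl <;> rcases hwf with h' | h' <;>
      · have := aux_getVert_inj hpath (by omega) (by omega) h'
        omega
  refine ⟨?_, ?_, ?_⟩
  · intro e he
    rcases Finset.mem_symmDiff.1 he with ⟨h1, _⟩ | ⟨h1, _⟩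
    · exact hM1 e h1
    · exact p.edges_subset_edgeSet (List.mem_toFinset.1 h1)
  · intro e he f hf hne w hwe hwf
    rw [Set.mem_symmDiff] at he hf
    rcases he with ⟨heM, heE⟩ | ⟨heE, heM⟩ <;> rcases hf with ⟨hfM, hfE⟩ | ⟨hfE, hfM⟩
    · exact hM2 heM hfM hne w hwe hwf
    · exact cross e (Finset.mem_coe.1 heM) (fun h => heE (Finset.mem_coe.2 h))
        f (Finset.mem_coe.1 hfE) w hwe hwf
    · exact cross f (Finset.mem_coe.1 hfM) (fun h => hfE (Finset.mem_coe.2 h))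
        e (Finset.mem_coe.1 heE) w hwf hwe
    · exact pairE e (Finset.mem_coe.1 heE) (fun h => heM (Finset.mem_coe.2 h))
        f (Finset.mem_coe.1 hfE) (fun h => hfM (Finset.mem_coe.2 h)) hne w hwe hwf
  · -- cardinality
    have hEcard : E.card = p.length := by
      rw [hE, List.toFinset_card_of_nodup hnodup, p.length_edges]
    have hMint : (E.filter (· ∈ M)).card = p.length / 2 := by
      rw [hE, aux_card_filter_list p.edges hnodup (· ∈ M) (fun j => Odd j) halt,
        p.length_edges, aux_card_odd_range]
    have hinter : E ∩ M = E.filter (· ∈ M) := Finset.filter_mem_eq_inter.symm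
    have hMsd : (M \ E).card + (M ∩ E).card = M.card :=
      Finset.card_sdiff_add_card_inter M E
    have hEsd : (E \ M).card + (E ∩ M).card = E.card :=
      Finset.card_sdiff_add_card_inter E M
    have h3 : (E ∩ M).card = p.length / 2 := by rw [hinter, hMint]
    have h4 : (M ∩ E).card = p.length / 2 := by rw [Finset.inter_comm, h3]
    have hsd : symmDiff M E = (M \ E) ∪ (E \ M) := symmDiff_def M E
    have hdisj : Disjoint (M \ E) (E \ M) := disjoint_sdiff_sdiff
    have hcard : (symmDiff M E).card = (M \ E).card + (E \ M).card := by
      rw [hsd, Finset.card_union_of_disjoint hdisj]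
    have hodd' : p.length % 2 = 1 := Nat.odd_iff.1 hodd
    rw [hcard]
    omega
end
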